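/- Let g ∈ C^∞(ℝⁿ) be positive and rotationally symmetric. Then there exists an entire strictly convex function u ∈ C^∞(ℝⁿ) with |∇u(x)| < 1 for all x and satisfying det D²u(x) = g(x) · (1 − |∇u(x)|²)^{(n+2)/2} for all x ∈ ℝⁿ. -/

import Mathlib

/-!
We look for a radial solution `u(x) = φ(|x|)` with `φ' r = r ρ r` and `ρ' r = r ρ₁ r`. Then
`∇u = ρ x` and `D²u = ρ I + ρ₁ x xᵀ`, so `det D²u = ρⁿ⁻¹ (r ρ)'` at `r = |x|`, and the equation
becomes the ODE `ρⁿ⁻¹ (r ρ)' = G (1 - (r ρ)²)^((n+2)/2)` for the profile `G` of `g`. It is solved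
explicitly: if `(r b)ⁿ = ∫₀ʳ n sⁿ⁻¹ G(s) ds`, then `ρ = b / √(1 + (r b)²)` works, and `|r ρ| < 1`
comes for free. Smoothness at the origin rests on Hadamard's lemma: an even smooth `θ` has
`θ' r = r σ r` with `σ` even and smooth, so the derivative `σ(|x|) x` of `θ(|x|)` is again built
from a radial function of the same kind.
-/

open Set Filter Topology MeasureTheory

noncomputable section

/-- `gradv u x` is the gradient (vector of partial derivatives) of `u` at `x`. -/
def gradv {n : ℕ} (u : (Fin n → ℝ) → ℝ) (x : Fin n → ℝ) : Fin n → ℝ :=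
  fun i => fderiv ℝ u x (Pi.single i 1)

/-- `hessM u x` is the Hessian matrix `D²u(x)`. -/
def hessM {n : ℕ} (u : (Fin n → ℝ) → ℝ) (x : Fin n → ℝ) : Matrix (Fin n) (Fin n) ℝ :=
  Matrix.of (fun i j => fderiv ℝ (fun y => fderiv ℝ u y (Pi.single j 1)) x (Pi.single i 1))

/-- Euclidean inner product on `Fin n → ℝ`. -/
def dotp {n : ℕ} (a b : Fin n → ℝ) : ℝ := ∑ i, a i * b i

/-- Euclidean norm on `Fin n → ℝ`. -/
def eNorm {n : ℕ} (a : Fin n → ℝ) : ℝ := Real.sqrt (dotp a a)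

/-- Inner unit normal `ν(x) = -∇Φ(x)/|∇Φ(x)|` for the domain `Ω = {Φ < 0}`. -/
def innerNormal {n : ℕ} (Φ : (Fin n → ℝ) → ℝ) (x : Fin n → ℝ) : Fin n → ℝ :=
  fun i => -(gradv Φ x i) / eNorm (gradv Φ x)

open intervalIntegral
open scoped ContDiff

def dilationIntegral (c f : ℝ → ℝ) (t : ℝ) : ℝ := ∫ u in (0 : ℝ)..1, c u * f (t * u)

theorem hasDerivAt_dilationIntegral {c f : ℝ → ℝ} (hc : Continuous c) (hf : ContDiff ℝ 1 f)
    (t₀ : ℝ) :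
    HasDerivAt (dilationIntegral c f) (dilationIntegral (fun u => c u * u) (deriv f) t₀) t₀ := by
  set F' : ℝ → ℝ → ℝ := fun x u => c u * (deriv f (x * u) * u) with hF'
  obtain ⟨C, hC⟩ : ∃ C, ∀ p ∈ Metric.closedBall t₀ 1 ×ˢ Icc (0 : ℝ) 1, ‖F' p.1 p.2‖ ≤ C :=
    ((isCompact_closedBall t₀ 1).prod isCompact_Icc).exists_bound_of_continuousOn
      (by fun_prop : Continuous fun p : ℝ × ℝ => F' p.1 p.2).continuousOn
  have hF : Continuous fun p : ℝ × ℝ => c p.2 * f (p.1 * p.2) := by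
    have := hf.continuous; fun_prop
  have key := hasDerivAt_integral_of_dominated_loc_of_deriv_le (μ := volume) (a := 0) (b := 1)
    (F := fun x u => c u * f (x * u)) (F' := F') (x₀ := t₀) (bound := fun _ => C)
    (Metric.closedBall_mem_nhds t₀ one_pos)
    (Eventually.of_forall fun x => (hF.comp (Continuous.prodMk_right x)).aestronglyMeasurable)
    ((hF.comp (Continuous.prodMk_right t₀)).intervalIntegrable 0 1)
    ((by fun_prop : Continuous (F' t₀)).aestronglyMeasurable)
    (Eventually.of_forall fun u hu x hx =>
      hC (x, u) ⟨hx, Ioc_subset_Icc_self (by simpa [uIoc_of_le zero_le_one] using hu)⟩)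
    intervalIntegrable_const
    (Eventually.of_forall fun u _ x _ => by
      simpa [hF', mul_assoc] using
        (((hf.differentiable one_ne_zero (x * u)).hasDerivAt).comp x
          ((hasDerivAt_id x).mul_const u)).const_mul (c u))
  have hF'int : dilationIntegral (fun u => c u * u) (deriv f) t₀ = ∫ u in (0 : ℝ)..1, F' t₀ u :=
    integral_congr fun u _ => by simp only [hF']; ring
  exact hF'int ▸ key.2

theorem contDiff_dilationIntegral {c f : ℝ → ℝ} (hc : Continuous c) (hf : ContDiff ℝ ∞ f) :
    ContDiff ℝ ∞ (dilationIntegral c f) := by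
  refine contDiff_infty.2 fun m => ?_
  induction m generalizing c f with
  | zero =>
    exact contDiff_zero.2 (continuous_iff_continuousAt.2 fun t =>
      (hasDerivAt_dilationIntegral hc (hf.of_le (by simp)) t).continuousAt)
  | succ m ih =>
    have hderiv := fun t => hasDerivAt_dilationIntegral hc (hf.of_le (by simp)) t
    push_cast
    refine contDiff_succ_iff_deriv.2 ⟨fun t => (hderiv t).differentiableAt, by simp, ?_⟩
    rw [funext fun t => (hderiv t).deriv]
    exact ih (hc.mul continuous_id) (contDiff_infty_iff_deriv.1 hf).2

theorem Function.Even.dilationIntegral {f : ℝ → ℝ} (hf : f.Even) (c : ℝ → ℝ) :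
    (dilationIntegral c f).Even := fun t =>
  integral_congr fun u _ => by rw [neg_mul, hf]

section Parity

variable {𝕜 F : Type*} [NontriviallyNormedField 𝕜] [NormedAddCommGroup F] [NormedSpace 𝕜 F]

theorem Function.Even.deriv {f : 𝕜 → F} (hf : f.Even) : (deriv f).Odd := fun x => by
  simpa [funext hf] using deriv_comp_neg f (-x)

theorem Function.Odd.deriv {f : 𝕜 → F} (hf : f.Odd) : (deriv f).Even := fun x => by
  have h : (fun x => f (-x)) = -f := funext hf
  simpa [h, deriv.neg] using (deriv_comp_neg f x).symm

end Parity

/-- `σ r = ∫₀¹ θ''(r u) du`: Hadamard's lemma for the odd function `θ'`. -/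
theorem exists_deriv_eq_mul_of_even {θ : ℝ → ℝ} (hθ : ContDiff ℝ ∞ θ) (heven : θ.Even) :
    ∃ σ : ℝ → ℝ, ContDiff ℝ ∞ σ ∧ σ.Even ∧ ∀ r, deriv θ r = r * σ r := by
  have hθ' := (contDiff_infty_iff_deriv.1 hθ).2
  have hθ'' := (contDiff_infty_iff_deriv.1 hθ').2
  refine ⟨dilationIntegral (fun _ => 1) (deriv (deriv θ)),
    contDiff_dilationIntegral continuous_const hθ'', heven.deriv.deriv.dilationIntegral _,
    fun r => ?_⟩
  have hftc : ∫ s in (0 : ℝ)..r, deriv (deriv θ) s = deriv θ r - deriv θ 0 :=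
    integral_deriv_eq_sub (fun s _ => hθ'.differentiable (by simp) s)
      (hθ''.continuous.intervalIntegrable 0 r)
  simp [dilationIntegral, hftc, heven.deriv.map_zero]

theorem contDiff_primitive {f : ℝ → ℝ} (hf : ContDiff ℝ ∞ f) (a : ℝ) :
    ContDiff ℝ ∞ fun t => ∫ s in a..t, f s :=
  contDiff_infty_iff_deriv.2
    ⟨fun t => (hf.continuous.integral_hasStrictDerivAt a t).hasDerivAt.differentiableAt,
      by rwa [funext (hf.continuous.deriv_integral f a)]⟩

theorem Function.Odd.even_primitive {f : ℝ → ℝ} (hf : f.Odd) :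
    (fun t => ∫ s in (0 : ℝ)..t, f s).Even := fun t => by
  have h := integral_comp_neg (a := 0) (b := t) f
  simp only [hf.eq, intervalIntegral.integral_neg, neg_zero] at h
  rw [integral_symm 0 (-t)] at h
  show ∫ s in (0 : ℝ)..-t, f s = ∫ s in (0 : ℝ)..t, f s
  linarith

section Radial

variable {n : ℕ}

theorem dotp_smul_smul (a b : ℝ) (x y : Fin n → ℝ) :
    dotp (a • x) (b • y) = a * b * dotp x y := by
  simp only [dotp, Finset.mul_sum, Pi.smul_apply, smul_eq_mul]
  exact Finset.sum_congr rfl fun i _ => by ring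

theorem dotp_single (x : Fin n → ℝ) (i : Fin n) : dotp x (Pi.single i 1) = x i := by
  simp [dotp, Pi.single_apply]

theorem dotp_self_pos {x : Fin n → ℝ} (hx : x ≠ 0) : 0 < dotp x x :=
  Matrix.dotProduct_star_self_pos_iff.2 hx

theorem eNorm_eq_norm (x : Fin n → ℝ) :
    eNorm x = ‖(EuclideanSpace.equiv (Fin n) ℝ).symm x‖ := by
  simp [eNorm, dotp, EuclideanSpace.norm_eq, ← sq]

theorem eNorm_nonneg (x : Fin n → ℝ) : 0 ≤ eNorm x := Real.sqrt_nonneg _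

theorem eNorm_pos {x : Fin n → ℝ} (hx : x ≠ 0) : 0 < eNorm x :=
  Real.sqrt_pos.2 (dotp_self_pos hx)

theorem eNorm_sq (x : Fin n → ℝ) : eNorm x ^ 2 = dotp x x :=
  Real.sq_sqrt (Finset.sum_nonneg fun i _ => mul_self_nonneg (x i))

theorem eNorm_smul (a : ℝ) (x : Fin n → ℝ) : eNorm (a • x) = |a| * eNorm x := by
  rw [eNorm_eq_norm, map_smul, norm_smul, Real.norm_eq_abs, ← eNorm_eq_norm]

theorem eNorm_zero : eNorm (0 : Fin n → ℝ) = 0 := by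
  simpa using eNorm_smul 0 (0 : Fin n → ℝ)

theorem continuous_eNorm : Continuous (eNorm : (Fin n → ℝ) → ℝ) := by
  simpa only [← funext eNorm_eq_norm] using (EuclideanSpace.equiv (Fin n) ℝ).symm.continuous.norm

theorem isBigO_eNorm (l : Filter (Fin n → ℝ)) : (eNorm : (Fin n → ℝ) → ℝ) =O[l] fun y => y := by
  simpa only [ContinuousLinearEquiv.coe_coe, ← eNorm_eq_norm] using
    ((EuclideanSpace.equiv (Fin n) ℝ).symm.toContinuousLinearMap.isBigO_id l).norm_left

def dotpCLM (x : Fin n → ℝ) : (Fin n → ℝ) →L[ℝ] ℝ :=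
  ∑ i, x i • ContinuousLinearMap.proj i

theorem dotpCLM_apply (x y : Fin n → ℝ) : dotpCLM x y = dotp x y := by
  simp [dotpCLM, dotp]

theorem contDiff_dotpCLM {k : WithTop ℕ∞} : ContDiff ℝ k (dotpCLM : (Fin n → ℝ) → _) :=
  ContDiff.sum fun i _ => (contDiff_apply ℝ ℝ i).smul contDiff_const

theorem hasFDerivAt_dotp_self (x : Fin n → ℝ) :
    HasFDerivAt (fun y : Fin n → ℝ => dotp y y) ((2 : ℝ) • dotpCLM x) x := by
  have h := HasFDerivAt.fun_sum (u := Finset.univ) fun i _ =>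
    (hasFDerivAt_apply i x).mul (hasFDerivAt_apply (𝕜 := ℝ) i x)
  refine h.congr_fderiv ?_
  simp only [dotpCLM, two_smul, ← Finset.sum_add_distrib]

theorem hasFDerivAt_eNorm {x : Fin n → ℝ} (hx : x ≠ 0) :
    HasFDerivAt eNorm ((eNorm x)⁻¹ • dotpCLM x) x := by
  refine ((hasFDerivAt_dotp_self x).sqrt (dotp_self_pos hx).ne').congr_fderiv ?_
  rw [smul_smul, ← eNorm]
  congr 1
  field_simp

theorem hasFDerivAt_radial {θ σ : ℝ → ℝ} (hθ : Differentiable ℝ θ)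
    (hθσ : ∀ r, deriv θ r = r * σ r) (x : Fin n → ℝ) :
    HasFDerivAt (fun y : Fin n → ℝ => θ (eNorm y)) (σ (eNorm x) • dotpCLM x) x := by
  have hθ' : ∀ r, HasDerivAt θ (r * σ r) r := fun r => hθσ r ▸ (hθ r).hasDerivAt
  rcases eq_or_ne x 0 with rfl | hx
  -- at the origin `θ(|y|) - θ(0) = o(|y|)` because `θ'(0) = 0`, and `|y| = O(‖y‖)`
  · have h0 : (fun r => θ r - θ 0) =o[𝓝 0] fun r => r := by
      simpa using hasDerivAt_iff_isLittleO.1 (hθ' 0)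
    have hlim : Tendsto eNorm (𝓝 (0 : Fin n → ℝ)) (𝓝 0) :=
      eNorm_zero (n := n) ▸ continuous_eNorm.tendsto 0
    rw [hasFDerivAt_iff_isLittleO_nhds_zero]
    simpa [eNorm_zero, dotpCLM, Function.comp_def] using
      (h0.comp_tendsto hlim).trans_isBigO (isBigO_eNorm _)
  · refine ((hθ' (eNorm x)).comp_hasFDerivAt x (hasFDerivAt_eNorm hx)).congr_fderiv ?_
    have := (eNorm_pos hx).ne'
    rw [smul_smul]
    field_simp

theorem contDiff_radial {θ : ℝ → ℝ} (hθ : ContDiff ℝ ∞ θ) (heven : θ.Even) :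
    ContDiff ℝ ∞ fun x : Fin n → ℝ => θ (eNorm x) := by
  refine contDiff_infty.2 fun m => ?_
  induction m generalizing θ with
  | zero => exact contDiff_zero.2 (hθ.continuous.comp continuous_eNorm)
  | succ m ih =>
    obtain ⟨σ, hσ, hσeven, hθσ⟩ := exists_deriv_eq_mul_of_even hθ heven
    have hderiv := hasFDerivAt_radial (n := n) (hθ.differentiable (by simp)) hθσ
    push_cast
    refine contDiff_succ_iff_fderiv.2 ⟨fun x => (hderiv x).differentiableAt, by simp, ?_⟩
    rw [funext fun x => (hderiv x).fderiv]
    exact (ih hσ hσeven).smul contDiff_dotpCLM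

theorem gradv_radial {φ ρ : ℝ → ℝ} (hφ : Differentiable ℝ φ) (hφρ : ∀ r, deriv φ r = r * ρ r)
    (x : Fin n → ℝ) : gradv (fun y => φ (eNorm y)) x = ρ (eNorm x) • x := by
  ext i
  simp [gradv, (hasFDerivAt_radial hφ hφρ x).fderiv, dotpCLM_apply, dotp_single]

theorem hessM_radial {φ ρ ρ₁ : ℝ → ℝ} (hφ : Differentiable ℝ φ) (hρ : Differentiable ℝ ρ)
    (hφρ : ∀ r, deriv φ r = r * ρ r) (hρρ₁ : ∀ r, deriv ρ r = r * ρ₁ r) (x : Fin n → ℝ) :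
    hessM (fun y => φ (eNorm y)) x = ρ (eNorm x) • 1 + ρ₁ (eNorm x) • Matrix.vecMulVec x x := by
  ext i j
  have hgrad : (fun y => fderiv ℝ (fun z => φ (eNorm z)) y (Pi.single j 1)) =
      fun y => ρ (eNorm y) * y j :=
    funext fun y => congrFun (gradv_radial hφ hφρ y) j
  have hd : HasFDerivAt (fun y : Fin n → ℝ => ρ (eNorm y) * y j)
      (ρ (eNorm x) • ContinuousLinearMap.proj j + x j • ρ₁ (eNorm x) • dotpCLM x) x :=
    (hasFDerivAt_radial hρ hρρ₁ x).mul (hasFDerivAt_apply j x)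
  simp only [hessM, Matrix.of_apply, hgrad, hd.fderiv]
  rcases eq_or_ne i j with rfl | hij
  · simp [dotpCLM_apply, dotp_single, Matrix.vecMulVec_apply]
    ring
  · simp [dotpCLM_apply, dotp_single, Matrix.vecMulVec_apply, Matrix.one_apply_ne hij, hij.symm]
    ring

end Radial

section RankOnePerturbation

open Matrix

variable {ι : Type*} [Fintype ι] [DecidableEq ι]

theorem det_smul_one_add_smul_vecMulVec [Nonempty ι] {a : ℝ} (ha : a ≠ 0) (c : ℝ) (x : ι → ℝ) :
    (a • (1 : Matrix ι ι ℝ) + c • vecMulVec x x).det =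
      a ^ (Fintype.card ι - 1) * (a + c * (x ⬝ᵥ x)) := by
  have h : a • (1 : Matrix ι ι ℝ) + c • vecMulVec x x =
      a • (1 + vecMulVec ((c / a) • x) x) := by
    ext i j
    simp only [Matrix.add_apply, Matrix.smul_apply, vecMulVec_apply, Pi.smul_apply, smul_eq_mul,
      one_apply]
    field_simp
  rw [h, det_smul, vecMulVec_eq (ι := Unit), det_one_add_replicateCol_mul_replicateRow,
    dotProduct_smul, smul_eq_mul, ← pow_sub_one_mul Fintype.card_ne_zero]
  field_simp

theorem posDef_smul_one_add_smul_vecMulVec {a c : ℝ} (ha : 0 < a) (x : ι → ℝ)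
    (h : 0 < a + c * (x ⬝ᵥ x)) : (a • (1 : Matrix ι ι ℝ) + c • vecMulVec x x).PosDef := by
  refine posDef_iff_dotProduct_mulVec.2 ⟨?_, fun y hy => ?_⟩
  · simp [IsHermitian]
  · have hquad : star y ⬝ᵥ ((a • (1 : Matrix ι ι ℝ) + c • vecMulVec x x) *ᵥ y) =
        a * (y ⬝ᵥ y) + c * (x ⬝ᵥ y) ^ 2 := by
      simp only [star_trivial, add_mulVec, smul_mulVec, one_mulVec, vecMulVec_mulVec,
        dotProduct_add, dotProduct_smul, smul_eq_mul, op_smul_eq_mul, dotProduct_comm y x]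
      ring
    have hy : 0 < y ⬝ᵥ y := dotProduct_star_self_pos_iff.2 hy
    have hCS : (x ⬝ᵥ y) ^ 2 ≤ (x ⬝ᵥ x) * (y ⬝ᵥ y) := by
      simpa [dotProduct, sq] using Finset.sum_mul_sq_le_sq_mul_sq Finset.univ x y
    rw [hquad]
    rcases le_or_gt 0 c with hc | hc
    · nlinarith [sq_nonneg (x ⬝ᵥ y)]
    · nlinarith

end RankOnePerturbation

theorem pow_succ_mul_dilationIntegral (k : ℕ) (f : ℝ → ℝ) (t : ℝ) :
    t ^ (k + 1) * dilationIntegral (fun u => u ^ k) f t = ∫ s in (0 : ℝ)..t, s ^ k * f s := by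
  have h := smul_integral_comp_mul_left (a := 0) (b := 1) (fun s : ℝ => s ^ k * f s) t
  rw [mul_zero, mul_one] at h
  rw [← h, dilationIntegral, smul_eq_mul, ← intervalIntegral.integral_const_mul,
    ← intervalIntegral.integral_const_mul]
  exact integral_congr fun u _ => by ring

/-- `b r ^ n = ∫₀¹ n uⁿ⁻¹ G(r u) du` is a weighted average of `G`, and
`(r b r) ^ n = ∫₀ʳ n sⁿ⁻¹ G(s) ds`. -/
theorem exists_even_pos_pow_mul_deriv_eq {n : ℕ} (hn : 1 ≤ n) {G : ℝ → ℝ}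
    (hG : ContDiff ℝ ∞ G) (hGeven : G.Even) (hGpos : ∀ r, 0 < G r) :
    ∃ b : ℝ → ℝ, ContDiff ℝ ∞ b ∧ b.Even ∧ (∀ r, 0 < b r) ∧
      ∀ r, b r ^ (n - 1) * deriv (fun s => s * b s) r = G r := by
  obtain ⟨k, rfl⟩ := Nat.exists_eq_add_of_le' hn
  simp only [Nat.add_sub_cancel]
  set A := dilationIntegral (fun u => u ^ k) fun s => (k + 1 : ℕ) * G s with hA
  have hApos : ∀ r, 0 < A r := fun r => intervalIntegral_pos_of_pos_on
    ((by fun_prop : Continuous fun u => u ^ k * ((k + 1 : ℕ) * G (r * u))).intervalIntegrable 0 1)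
    (fun u hu => mul_pos (pow_pos hu.1 k) (mul_pos (by positivity) (hGpos _))) zero_lt_one
  set b : ℝ → ℝ := fun r => A r ^ ((k + 1 : ℕ)⁻¹ : ℝ) with hb_def
  have hA_smooth : ContDiff ℝ ∞ A :=
    contDiff_dilationIntegral (continuous_pow k) (contDiff_const.mul hG)
  have hb : ContDiff ℝ ∞ b := contDiff_iff_contDiffAt.2 fun r =>
    hA_smooth.contDiffAt.rpow_const_of_ne (hApos r).ne'
  have hbpow : ∀ r, b r ^ (k + 1) = A r := fun r => by
    rw [← Real.rpow_natCast, ← Real.rpow_mul (hApos r).le,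
      inv_mul_cancel₀ (by positivity), Real.rpow_one]
  have hprim : ∀ r, (r * b r) ^ (k + 1) = ∫ s in (0 : ℝ)..r, s ^ k * ((k + 1 : ℕ) * G s) :=
    fun r => by rw [mul_pow, hbpow, hA, pow_succ_mul_dilationIntegral]
  have hw : ContDiff ℝ ∞ fun s => s * b s := contDiff_id.mul hb
  have hderiv : ∀ r, r ^ k * (b r ^ k * deriv (fun s => s * b s) r) = r ^ k * G r := by
    intro r
    have hchain := (hw.differentiable (by simp) r).hasDerivAt.fun_pow (k + 1)
    rw [funext hprim] at hchain
    have hftc := ((by fun_prop : Continuous fun s : ℝ => s ^ k * ((k + 1 : ℕ) * G s)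
      ).integral_hasStrictDerivAt 0 r).hasDerivAt
    have h := hchain.unique hftc
    simp only [Nat.add_sub_cancel, mul_pow] at h
    apply mul_left_cancel₀ (by positivity : ((k + 1 : ℕ) : ℝ) ≠ 0)
    linear_combination h
  have hAeven : A.Even := Function.Even.dilationIntegral (fun s => by rw [hGeven]) _
  refine ⟨b, hb, fun r => by simp only [hb_def, hAeven r], fun r =>
    Real.rpow_pos_of_pos (hApos r) _, fun r => ?_⟩
  refine congrFun (Continuous.ext_on (dense_compl_singleton 0)
    (hb.continuous.pow k |>.mul (hw.continuous_deriv (by simp))) hG.continuous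
    fun r hr => mul_left_cancel₀ (pow_ne_zero k hr) (hderiv r)) r

theorem hasDerivAt_div_sqrt_one_add_sq {w : ℝ → ℝ} {w' r : ℝ} (hw : HasDerivAt w w' r) :
    HasDerivAt (fun s => w s / √(1 + w s ^ 2)) (w' / √(1 + w r ^ 2) ^ 3) r := by
  have hpos : 0 < 1 + w r ^ 2 := by positivity
  have hS := ((hw.fun_pow 2).const_add 1).sqrt hpos.ne'
  refine (hw.div hS (Real.sqrt_pos.2 hpos).ne').congr_deriv ?_
  have hSsq := Real.sq_sqrt hpos.le
  have hSne := (Real.sqrt_pos.2 hpos).ne'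
  field_simp
  rw [hSsq, show (2 : ℕ) - 1 = 1 from rfl]
  push_cast
  ring

theorem inv_sq_rpow_add_two_div_two {S : ℝ} (hS : 0 ≤ S) (n : ℕ) :
    (S ^ 2)⁻¹ ^ (((n : ℝ) + 2) / 2) = (S ^ (n + 2))⁻¹ := by
  rw [Real.inv_rpow (by positivity), ← Real.rpow_natCast S 2, ← Real.rpow_mul hS,
    ← Real.rpow_natCast S (n + 2)]
  congr 2
  push_cast
  ring

/-- With `w = r b` and `S = √(1 + w²)`, the profile `ρ = b / S` has `r ρ = w / S`, so
`(r ρ)' = w' / S³` and `1 - (r ρ)² = S⁻²`. -/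
theorem exists_spacelike_profile {n : ℕ} (hn : 1 ≤ n) {G b : ℝ → ℝ} (hb : ContDiff ℝ ∞ b)
    (hbeven : b.Even) (hbpos : ∀ r, 0 < b r)
    (hbG : ∀ r, b r ^ (n - 1) * deriv (fun s => s * b s) r = G r) :
    ∃ ρ : ℝ → ℝ, ContDiff ℝ ∞ ρ ∧ ρ.Even ∧ (∀ r, 0 < ρ r) ∧ (∀ r, (r * ρ r) ^ 2 < 1) ∧
      ∀ r, ρ r ^ (n - 1) * deriv (fun s => s * ρ s) r =
        G r * (1 - (r * ρ r) ^ 2) ^ (((n : ℝ) + 2) / 2) := by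
  set w : ℝ → ℝ := fun s => s * b s with hw_def
  have hw : ContDiff ℝ ∞ w := contDiff_id.mul hb
  set S : ℝ → ℝ := fun s => √(1 + w s ^ 2) with hS_def
  have hSpos : ∀ r, 0 < S r := fun r => Real.sqrt_pos.2 (by positivity)
  have hSsq : ∀ r, S r ^ 2 = 1 + w r ^ 2 := fun r => Real.sq_sqrt (by positivity)
  have hψ : (fun s => s * (b s / S s)) = fun s => w s / S s := funext fun s => by ring
  have hψ_sq : ∀ r, 1 - (r * (b r / S r)) ^ 2 = (S r ^ 2)⁻¹ := fun r => by
    have := (hSpos r).ne'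
    have h : (r * (b r / S r)) ^ 2 = w r ^ 2 / S r ^ 2 := by simp only [hw_def]; ring
    rw [h, hSsq]
    field_simp
    ring
  refine ⟨fun s => b s / S s, hb.div ((contDiff_const.add (hw.pow 2)).sqrt fun r => by positivity)
    fun r => (hSpos r).ne', fun r => ?_, fun r => div_pos (hbpos r) (hSpos r), fun r => ?_,
    fun r => ?_⟩
  · simp only [hS_def, hw_def, hbeven.eq, neg_mul, neg_sq]
  · have := hψ_sq r
    have := inv_pos.2 (pow_pos (hSpos r) 2)
    linarith
  · obtain ⟨k, rfl⟩ := Nat.exists_eq_add_of_le' hn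
    have := (hSpos r).ne'
    rw [hψ, (hasDerivAt_div_sqrt_one_add_sq
      (hw.differentiable (by simp) r).hasDerivAt).deriv, hψ_sq,
      inv_sq_rpow_add_two_div_two (hSpos r).le, ← hbG r]
    simp only [Nat.add_sub_cancel, div_pow]
    field_simp
    ring

theorem exists_radial_solution {n : ℕ} (hn : 1 ≤ n) {G ρ : ℝ → ℝ} (hGpos : ∀ r, 0 < G r)
    (hρ : ContDiff ℝ ∞ ρ) (hρeven : ρ.Even) (hρpos : ∀ r, 0 < ρ r)
    (hspace : ∀ r, (r * ρ r) ^ 2 < 1)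
    (hρG : ∀ r, ρ r ^ (n - 1) * deriv (fun s => s * ρ s) r =
      G r * (1 - (r * ρ r) ^ 2) ^ (((n : ℝ) + 2) / 2)) :
    ∃ u : (Fin n → ℝ) → ℝ, ContDiff ℝ ∞ u ∧ (∀ x, (hessM u x).PosDef) ∧
      (∀ x, eNorm (gradv u x) < 1) ∧
      ∀ x, (hessM u x).det =
        G (eNorm x) * (1 - dotp (gradv u x) (gradv u x)) ^ (((n : ℝ) + 2) / 2) := by
  have : Nonempty (Fin n) := ⟨⟨0, hn⟩⟩
  have hψ : ContDiff ℝ ∞ fun s => s * ρ s := contDiff_id.mul hρ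
  have hψodd : (fun s => s * ρ s).Odd := fun s => by simp only [hρeven.eq, neg_mul]
  set φ : ℝ → ℝ := fun t => ∫ s in (0 : ℝ)..t, s * ρ s
  have hφρ : ∀ r, deriv φ r = r * ρ r := hψ.continuous.deriv_integral _ 0
  have hφ : Differentiable ℝ φ := (contDiff_primitive hψ 0).differentiable (by simp)
  obtain ⟨ρ₁, -, -, hρρ₁⟩ := exists_deriv_eq_mul_of_even hρ hρeven
  have hρ' : Differentiable ℝ ρ := hρ.differentiable (by simp)
  have hψ' : ∀ r, deriv (fun s => s * ρ s) r = ρ r + ρ₁ r * r ^ 2 := fun r => by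
    rw [((hasDerivAt_id' r).fun_mul (hρ' r).hasDerivAt).deriv, hρρ₁]
    ring
  have hψ'pos : ∀ r, 0 < ρ r + ρ₁ r * r ^ 2 := fun r => by
    have hlhs : 0 < ρ r ^ (n - 1) * deriv (fun s => s * ρ s) r := hρG r ▸ mul_pos (hGpos r)
      (Real.rpow_pos_of_pos (sub_pos.2 (hspace r)) _)
    exact hψ' r ▸ pos_of_mul_pos_right hlhs (pow_pos (hρpos r) _).le
  have hdot : ∀ x : Fin n → ℝ, x ⬝ᵥ x = eNorm x ^ 2 := fun x => (eNorm_sq x).symm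
  refine ⟨fun x => φ (eNorm x), contDiff_radial (contDiff_primitive hψ 0)
    hψodd.even_primitive, fun x => ?_, fun x => ?_, fun x => ?_⟩
  · rw [hessM_radial hφ hρ' hφρ hρρ₁]
    exact posDef_smul_one_add_smul_vecMulVec (hρpos _) x (hdot x ▸ hψ'pos _)
  · rw [gradv_radial hφ hφρ, eNorm_smul, abs_of_pos (hρpos _)]
    have := mul_nonneg (eNorm_nonneg x) (hρpos (eNorm x)).le
    nlinarith [hspace (eNorm x)]
  · rw [hessM_radial hφ hρ' hφρ hρρ₁, gradv_radial hφ hφρ,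
      det_smul_one_add_smul_vecMulVec (hρpos _).ne', Fintype.card_fin, dotp_smul_smul, hdot,
      ← eNorm_sq, ← hψ', hρG]
    ring_nf

/-- Theorem A.2 (first part): for every positive smooth rotationally symmetric `g`
there is an entire strictly convex spacelike solution of the prescribed Gauß
curvature equation in Minkowski space. -/
theorem entire_minkowski_prescribed_gauss_curvature
    (n : ℕ) (hn : 2 ≤ n)
    (g : (Fin n → ℝ) → ℝ) (hg : ContDiff ℝ (⊤ : ℕ∞) g) (hgpos : ∀ x, 0 < g x)
    (hgsym : ∀ x y : Fin n → ℝ, eNorm x = eNorm y → g x = g y)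
 :
    ∃ u : (Fin n → ℝ) → ℝ,
      ContDiff ℝ (⊤ : ℕ∞) u ∧
      (∀ x, (hessM u x).PosDef) ∧
      (∀ x, eNorm (gradv u x) < 1) ∧
      (∀ x, (hessM u x).det =
        g x * (1 - dotp (gradv u x) (gradv u x)) ^ (((n : ℝ) + 2) / 2)) := by
  have hn1 : 1 ≤ n := by omega
  set e : Fin n → ℝ := Pi.single ⟨0, hn1⟩ 1
  have he : ∀ r : ℝ, eNorm (r • e) = |r| := fun r => by
    rw [eNorm_smul, show eNorm e = 1 by simp [eNorm, e, dotp_single], mul_one]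
  set G : ℝ → ℝ := fun r => g (r • e)
  have hgG : ∀ x, g x = G (eNorm x) := fun x =>
    hgsym _ _ (by rw [he, abs_of_nonneg (eNorm_nonneg x)])
  obtain ⟨b, hb, hbeven, hbpos, hbG⟩ := exists_even_pos_pow_mul_deriv_eq (G := G) hn1
    (hg.comp (contDiff_id.smul contDiff_const)) (fun r => hgsym _ _ (by rw [he, he, abs_neg]))
    (fun r => hgpos _)
  obtain ⟨ρ, hρ, hρeven, hρpos, hspace, hρG⟩ := exists_spacelike_profile hn1 hb hbeven hbpos hbG
  obtain ⟨u, hu, hconvex, hgrad, hdet⟩ :=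
    exists_radial_solution hn1 (fun r => hgpos _) hρ hρeven hρpos hspace hρG
  exact ⟨u, hu, hconvex, hgrad, fun x => hgG x ▸ hdet x⟩
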